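/- Let A be a finite structure with binary relations f and R satisfying T1[f] and the induction principle (for all first-order definable predicates; it suffices to assume it for all predicates P : V → Prop). Then R equals the reflexive transitive closure of f. -/

import Mathlib

theorem Relation.ReflTransGen.of_refl_of_head_step {V : Type*} {f R : V → V → Prop}
    (hrefl : ∀ u, R u u) (hhead : ∀ u w v, f u w → R w v → R u v) {u v : V}
    (h : Relation.ReflTransGen f u v) : R u v := by
  induction h using Relation.ReflTransGen.head_induction_on with
  | refl => exact hrefl v
  | head hstep _ ih => exact hhead _ _ v hstep ih

theorem Relation.reflTransGen_of_induction {V : Type*} {f R : V → V → Prop}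
    (hInd : ∀ (P : V → Prop) (z : V),
      (P z ∧ ∀ u v, P u → f u v → P v) → ∀ u, R z u → P u)
    {u v : V} (h : R u v) : Relation.ReflTransGen f u v :=
  hInd (Relation.ReflTransGen f u) u ⟨.refl, fun _ _ ha hab => ha.tail hab⟩ v h

theorem stmt_11_general {V : Type*} (f R : V → V → Prop)
    (hT1 : ∀ u v : V, R u v ↔ (u = v ∨ ∃ w, f u w ∧ R w v))
    (hInd : ∀ (P : V → Prop) (z : V),
      (P z ∧ ∀ u v, P u → f u v → P v) → ∀ u, R z u → P u) :
    ∀ u v : V, R u v ↔ Relation.ReflTransGen f u v := by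
  have hrefl : ∀ u, R u u := fun u => (hT1 u u).mpr (.inl rfl)
  have hhead : ∀ u w v, f u w → R w v → R u v :=
    fun u w v hf hR => (hT1 u v).mpr (.inr ⟨w, hf, hR⟩)
  exact fun u v => ⟨Relation.reflTransGen_of_induction hInd,
    Relation.ReflTransGen.of_refl_of_head_step hrefl hhead⟩

theorem stmt_11 {V : Type*} [Fintype V] [Nonempty V] (f R : V → V → Prop)
    (hT1 : ∀ u v : V, R u v ↔ (u = v ∨ ∃ w, f u w ∧ R w v))
    (hInd : ∀ (P : V → Prop) (z : V),
      (P z ∧ ∀ u v, P u → f u v → P v) → ∀ u, R z u → P u) :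
    ∀ u v : V, R u v ↔ Relation.ReflTransGen f u v :=
  stmt_11_general f R hT1 hInd
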